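/- Let ρ and τ be nonempty words on distinct integers whose standardizations are ballot permutations, with ρτ a permutation of {1,…,n}, ρ of length l, and ρ₁ < τ₁. Then in π = ρʳτ, position l is the last lowest position of π. -/
import Mathlib


open scoped Classical

/-- Number of descents of a word. -/
def descents (l : List ℤ) : ℕ := ((l.zip l.tail).filter (fun p => decide (p.2 < p.1))).length

/-- Number of ascents of a word. -/
def ascents (l : List ℤ) : ℕ := ((l.zip l.tail).filter (fun p => decide (p.1 < p.2))).length

/-- Height of a word: ascents minus descents. -/
def ht (l : List ℤ) : ℤ := (ascents l : ℤ) - (descents l : ℤ)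

/-- A word is ballot if every prefix has nonnegative height. -/
def IsBallot (l : List ℤ) : Prop := ∀ k : ℕ, 0 ≤ ht (l.take k)

/-- Depth: negative of the minimum height over nonempty prefixes (0 for the empty word;
note every word of length ≥ 1 has a prefix of height 0, so folding with 0 is harmless). -/
def depth (l : List ℤ) : ℤ :=
  -(((List.range l.length).map (fun i => ht (l.take (i + 1)))).foldr min 0)

/-- Number of peaks of a word. -/
def peaks (l : List ℤ) : ℕ :=
  ((l.zip (l.tail.zip l.tail.tail)).filter
    (fun p => decide (p.1 < p.2.1 ∧ p.2.2 < p.2.1))).length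

/-- The list [1, 2, ..., n] as integers. -/
def baseList (n : ℕ) : List ℤ := (List.range n).map (fun i => (i : ℤ) + 1)

/-- The one-line word of a permutation of {1,…,n}. -/
def permList {n : ℕ} (σ : Equiv.Perm (Fin n)) : List ℤ :=
  List.ofFn (fun i => ((σ i : ℕ) : ℤ) + 1)

/-- Standardization of a word on distinct integers. -/
def stdz (l : List ℤ) : List ℤ :=
  l.map (fun x => ((l.filter (fun y => decide (y < x))).length : ℤ) + 1)

/-- step of an adjacent pair -/
def stepf (a b : ℤ) : ℤ := (if a < b then 1 else 0) - (if b < a then 1 else 0)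

lemma stepf_neg (a b : ℤ) : stepf a b = - stepf b a := by unfold stepf; ring

lemma ht_nil : ht ([] : List ℤ) = 0 := by simp [ht, ascents, descents]

lemma ht_single (x : ℤ) : ht [x] = 0 := by simp [ht, ascents, descents]

lemma ht_cons_cons (x y : ℤ) (t : List ℤ) :
    ht (x :: y :: t) = stepf x y + ht (y :: t) := by
  simp only [ht, ascents, descents, stepf, List.tail_cons, List.zip_cons_cons,
    List.filter_cons]
  by_cases h1 : x < y <;> by_cases h2 : y < x <;>
    simp [h1, h2] <;> push_cast <;> ring

lemma ht_cons (x : ℤ) (m : List ℤ) (hm : m ≠ []) :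
    ht (x :: m) = stepf x m.headI + ht m := by
  cases m with
  | nil => simp at hm
  | cons y t => simpa using ht_cons_cons x y t

lemma ht_append (a b : List ℤ) (ha : a ≠ []) (hb : b ≠ []) :
    ht (a ++ b) = ht a + stepf a.reverse.headI b.headI + ht b := by
  induction a with
  | nil => simp at ha
  | cons x a'' ih =>
    cases a'' with
    | nil =>
      cases b with
      | nil => simp at hb
      | cons v b' =>
        rw [show ([x] ++ v :: b') = x :: v :: b' from rfl, ht_cons_cons, ht_single]
        simp only [List.reverse_singleton, List.headI]
        ring
    | cons y t =>
      have hne : (y :: t : List ℤ) ≠ [] := by simp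
      have h1 : ((y :: t) ++ b).headI = y := by simp
      have h2 : ht (x :: ((y :: t) ++ b)) = stepf x y + ht ((y :: t) ++ b) := by
        rw [ht_cons x _ (by simp), h1]
      have h3 : (x :: y :: t).reverse.headI = (y :: t).reverse.headI := by
        cases h : (y :: t).reverse with
        | nil => simp at h
        | cons z s => rw [List.reverse_cons, h]; simp
      rw [List.cons_append, h2, ih hne, ht_cons_cons, h3]; ring

lemma ht_reverse (l : List ℤ) : ht l.reverse = - ht l := by
  induction l with
  | nil => simp [ht_nil]
  | cons x t ih =>
    cases t with
    | nil => simp [ht_single]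
    | cons y s =>
      have hne : (y :: s : List ℤ).reverse ≠ [] := by simp
      rw [List.reverse_cons, ht_append _ _ hne (by simp), ih, ht_single,
        List.reverse_reverse, ht_cons_cons]
      simp only [List.headI]
      rw [stepf_neg y x]; ring

lemma ht_take_drop (k : ℕ) : ∀ (w : List ℤ), ht w = ht (w.take (k + 1)) + ht (w.drop k) := by
  induction k with
  | zero =>
    intro w
    cases w with
    | nil => simp [ht_nil]
    | cons x t => simp [ht_single]
  | succ k ih =>
    intro w
    cases w with
    | nil => simp [ht_nil]
    | cons x t =>
      cases t with
      | nil => simp [ht_single, ht_nil]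
      | cons y s =>
        have : ht (x :: y :: s) = stepf x y + ht (y :: s) := ht_cons_cons x y s
        rw [this, ih (y :: s)]
        have h1 : (x :: y :: s).take (k + 1 + 1) = x :: (y :: s).take (k + 1) := rfl
        have h2 : (x :: y :: s).drop (k + 1) = (y :: s).drop k := rfl
        rw [h1, h2]
        have h3 : (y :: s).take (k + 1) = y :: s.take k := rfl
        rw [h3, ht_cons_cons, ← h3]
        ring

lemma count_lt_mono {l : List ℤ} {a b : ℤ} (ha : a ∈ l) (hab : a < b) :
    (l.filter (fun y => decide (y < a))).length < (l.filter (fun y => decide (y < b))).length := by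
  rw [← List.countP_eq_length_filter, ← List.countP_eq_length_filter]
  induction l with
  | nil => simp at ha
  | cons x t ih =>
    rw [List.countP_cons, List.countP_cons]
    have hmono : List.countP (fun y => decide (y < a)) t ≤
        List.countP (fun y => decide (y < b)) t :=
      List.countP_mono_left (fun x _ hx => by
        simp only [decide_eq_true_eq] at *; exact lt_trans hx hab)
    rcases List.mem_cons.mp ha with rfl | hmem
    · simp only [decide_eq_true_eq, lt_irrefl, if_false, hab, if_true]
      omega
    · have hih := ih hmem
      by_cases h1 : x < a
      · have h2 : x < b := lt_trans h1 hab
        simp only [h1, h2, decide_eq_true_eq, if_true]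
        omega
      · by_cases h2 : x < b <;> simp [h1, h2] <;> omega

lemma stepf_stdz {l : List ℤ} {a b : ℤ} (ha : a ∈ l) (hb : b ∈ l) :
    stepf (((l.filter (fun y => decide (y < a))).length : ℤ) + 1)
          (((l.filter (fun y => decide (y < b))).length : ℤ) + 1) = stepf a b := by
  rcases lt_trichotomy a b with h | h | h
  · have := count_lt_mono ha h
    have h2 : ¬ b < a := not_lt.mpr (le_of_lt h)
    have h3 : (((l.filter (fun y => decide (y < a))).length : ℤ) + 1) <
        (((l.filter (fun y => decide (y < b))).length : ℤ) + 1) := by exact_mod_cast by omega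
    simp [stepf, h, h2, h3, not_lt.mpr (le_of_lt h3)]
  · subst h; simp [stepf]
  · have := count_lt_mono hb h
    have h2 : ¬ a < b := not_lt.mpr (le_of_lt h)
    have h3 : (((l.filter (fun y => decide (y < b))).length : ℤ) + 1) <
        (((l.filter (fun y => decide (y < a))).length : ℤ) + 1) := by exact_mod_cast by omega
    simp [stepf, h, h2, h3, not_lt.mpr (le_of_lt h3)]

lemma ht_map_stdz (l : List ℤ) :
    ∀ m : List ℤ, (∀ x ∈ m, x ∈ l) →
      ht (m.map (fun x => ((l.filter (fun y => decide (y < x))).length : ℤ) + 1)) = ht m := by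
  intro m
  induction m with
  | nil => intro _; simp
  | cons x t ih =>
    intro hsub
    cases t with
    | nil => simp [ht_single]
    | cons y s =>
      have hx : x ∈ l := hsub x (by simp)
      have hy : y ∈ l := hsub y (by simp)
      have htail : ∀ z ∈ y :: s, z ∈ l := fun z hz => hsub z (List.mem_cons_of_mem _ hz)
      simp only [List.map_cons] at *
      rw [ht_cons_cons, ht_cons_cons, stepf_stdz hx hy, ih htail]

lemma ballot_of_stdz {l : List ℤ} (h : IsBallot (stdz l)) : IsBallot l := by
  intro k
  have := h k
  unfold stdz at this
  rw [← List.map_take] at this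
  rwa [ht_map_stdz l (l.take k) (fun x hx => List.take_subset k l hx)] at this

lemma ht_drop_le {w : List ℤ} (hw : IsBallot w) (k : ℕ) : ht (w.drop k) ≤ ht w := by
  have := ht_take_drop k w
  have h0 := hw (k + 1)
  omega

lemma headI_take {w : List ℤ} {m : ℕ} (hm : 1 ≤ m) : (w.take m).headI = w.headI := by
  cases w with
  | nil => simp
  | cons x t =>
    cases m with
    | zero => omega
    | succ m => simp

/-- If std(ρ), std(τ) are ballot, ρτ is a permutation of {1,…,n}, both ρ, τ nonempty
with ρ₁ < τ₁ and ρ of length l, then l is the last lowest position of π = ρʳτ. -/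
theorem last_lowest_position (n l : ℕ) (ρ τ : List ℤ)
    (hlen : ρ.length = l) (hρ : ρ ≠ []) (hτ : τ ≠ [])
    (hρb : IsBallot (stdz ρ)) (hτb : IsBallot (stdz τ))
    (hperm : (ρ ++ τ).Perm (baseList n))
    (hheads : ρ.headI < τ.headI) :
    (∀ i : ℕ, 1 ≤ i → i ≤ n →
        ht ((ρ.reverse ++ τ).take l) ≤ ht ((ρ.reverse ++ τ).take i)) ∧
    (∀ i : ℕ, l < i → i ≤ n →
        ht ((ρ.reverse ++ τ).take l) < ht ((ρ.reverse ++ τ).take i)) := by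
  have hρb' : IsBallot ρ := ballot_of_stdz hρb
  have hτb' : IsBallot τ := ballot_of_stdz hτb
  have hrl : ρ.reverse.length = l := by simp [hlen]
  -- value at position l
  have hπl : (ρ.reverse ++ τ).take l = ρ.reverse := List.take_left' hrl
  -- heights for i ≤ l
  have hle : ∀ i : ℕ, i ≤ l → ht ((ρ.reverse ++ τ).take i) = - ht (ρ.drop (l - i)) := by
    intro i hi
    rw [List.take_append_of_le_length (by omega)]
    have : ρ.reverse.take i = (ρ.drop (l - i)).reverse := by
      have := @List.reverse_take ℤ ρ.reverse i
      rw [List.reverse_reverse, hrl] at this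
      rw [← List.reverse_reverse (ρ.reverse.take i), this]
    rw [this, ht_reverse]
  -- strict part
  have hstrict : ∀ i : ℕ, l < i → i ≤ n →
      ht ((ρ.reverse ++ τ).take l) < ht ((ρ.reverse ++ τ).take i) := by
    intro i hli hin
    rw [hπl, List.take_append, hrl,
      List.take_of_length_le (by omega)]
    have hm : 1 ≤ i - l := by omega
    have htne : τ.take (i - l) ≠ [] := by
      rw [Ne, List.take_eq_nil_iff]
      push_neg
      exact ⟨by omega, hτ⟩
    rw [ht_append _ _ (by simpa using hρ) htne, List.reverse_reverse,
      headI_take hm, ht_reverse]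
    have h1 : stepf ρ.headI τ.headI = 1 := by simp [stepf, hheads, asymm hheads]
    have h2 : 0 ≤ ht (τ.take (i - l)) := hτb' (i - l)
    omega
  refine ⟨?_, hstrict⟩
  intro i hi1 hin
  rcases le_or_gt i l with h | h
  · rw [hle i h, hle l le_rfl]
    simp only [Nat.sub_self, List.drop_zero]
    have := ht_drop_le hρb' (l - i)
    omega
  · exact le_of_lt (hstrict i h hin)
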